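/- arXiv:2407.06496 — 2 statements merged into one kernel-verified Lean document; each statement's English description precedes it below -/
import Mathlib

section
/- A mechanism M is (ε, 0)-DP if and only if for all neighboring D, D', the trade-off function satisfies T(M(D), M(D'))(α) ≥ max(0, 1 − e^ε·α, e^{−ε}(1 − α)) for all α ∈ [0,1]. -/
open MeasureTheory

/-- The trade-off function `T(P,Q)(α)`: the infimum type-II error over all
measurable rejection rules `φ : X → [0,1]` with type-I error at most `α`. -/
noncomputable def tradeoff {X : Type*} [MeasurableSpace X]
    (P Q : Measure X) (α : ℝ) : ℝ :=
  sInf {β : ℝ | ∃ φ : X → ℝ, Measurable φ ∧ (∀ x, φ x ∈ Set.Icc (0:ℝ) 1) ∧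
    (∫ x, φ x ∂P) ≤ α ∧ β = ∫ x, (1 - φ x) ∂Q}

/-!
Pure DP is the pair of measure inequalities `P ≤ e^ε • Q` and `Q ≤ e^ε • P`. Integrating a test
`φ : X → [0,1]` gives `E_P φ ≤ e^ε E_Q φ` and the reverse; applied to `φ` and to `1 - φ` these
are the two linear lower bounds on the type-II error `1 - E_Q φ`. Conversely, the test rejecting
on `Sᶜ` has type-I error `1 - P S` and type-II error `Q S`, so the bound `e^{-ε} (1 - α)` at that
level is exactly `P S ≤ e^ε Q S`.
-/

section

variable {X : Type*} [MeasurableSpace X] {P Q : Measure X}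

lemma integrable_of_mem_Icc [IsFiniteMeasure P] {φ : X → ℝ} (hm : Measurable φ)
    (hb : ∀ x, φ x ∈ Set.Icc (0:ℝ) 1) : Integrable φ P :=
  .of_bound hm.aestronglyMeasurable 1 <| .of_forall fun x => by
    rw [Real.norm_eq_abs, abs_of_nonneg (hb x).1]; exact (hb x).2

lemma integral_one_sub [IsProbabilityMeasure P] {φ : X → ℝ} (hint : Integrable φ P) :
    ∫ x, (1 - φ x) ∂P = 1 - ∫ x, φ x ∂P := by
  rw [integral_sub (integrable_const 1) hint]
  simp

lemma integral_le_mul_integral_of_le_smul {c : ENNReal} (hc : c ≠ ⊤) (hPQ : P ≤ c • Q)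
    {φ : X → ℝ} (hφ : ∀ x, 0 ≤ φ x) (hint : Integrable φ Q) :
    ∫ x, φ x ∂P ≤ c.toReal * ∫ x, φ x ∂Q := by
  rw [← smul_eq_mul, ← integral_smul_measure]
  exact integral_mono_measure hPQ (.of_forall hφ) (hint.smul_measure hc)

lemma le_tradeoff {α b : ℝ} (hα : 0 ≤ α)
    (h : ∀ φ : X → ℝ, Measurable φ → (∀ x, φ x ∈ Set.Icc (0:ℝ) 1) → ∫ x, φ x ∂P ≤ α →
      b ≤ ∫ x, (1 - φ x) ∂Q) :
    b ≤ tradeoff P Q α := by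
  refine le_csInf ⟨_, 0, measurable_const, fun _ => by simp, by simpa using hα, rfl⟩ ?_
  rintro β ⟨φ, hm, hb, hφα, rfl⟩
  exact h φ hm hb hφα

lemma tradeoff_le {α : ℝ} {φ : X → ℝ} (hm : Measurable φ) (hb : ∀ x, φ x ∈ Set.Icc (0:ℝ) 1)
    (hφα : ∫ x, φ x ∂P ≤ α) :
    tradeoff P Q α ≤ ∫ x, (1 - φ x) ∂Q := by
  refine csInf_le ⟨0, ?_⟩ ⟨φ, hm, hb, hφα, rfl⟩
  rintro β ⟨ψ, -, hψ, -, rfl⟩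
  exact integral_nonneg fun x => sub_nonneg.2 (hψ x).2

lemma tradeoff_measureReal_compl_le {S : Set X} (hS : MeasurableSet S) :
    tradeoff P Q (P.real Sᶜ) ≤ Q.real S := by
  have hφ : ∀ x, Sᶜ.indicator 1 x ∈ Set.Icc (0:ℝ) 1 := fun x => by
    by_cases hx : x ∈ S <;> simp [hx]
  have hcompl : ∀ x, 1 - Sᶜ.indicator 1 x = S.indicator (1 : X → ℝ) x := fun x => by
    by_cases hx : x ∈ S <;> simp [hx]
  calc tradeoff P Q (P.real Sᶜ)
      ≤ ∫ x, (1 - Sᶜ.indicator 1 x) ∂Q :=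
        tradeoff_le (measurable_const.indicator hS.compl) hφ (integral_indicator_one hS.compl).le
    _ = Q.real S := by simp_rw [hcompl]; exact integral_indicator_one hS

lemma tradeoff_lower_bound_of_le_smul [IsProbabilityMeasure P] [IsProbabilityMeasure Q]
    {ε α : ℝ} (hPQ : P ≤ ENNReal.ofReal (Real.exp ε) • Q)
    (hQP : Q ≤ ENNReal.ofReal (Real.exp ε) • P) (hα : 0 ≤ α) :
    max 0 (max (1 - Real.exp ε * α) (Real.exp (-ε) * (1 - α))) ≤ tradeoff P Q α := by
  refine le_tradeoff hα fun φ hm hb hφα => ?_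
  have hψ : ∀ x, 1 - φ x ∈ Set.Icc (0:ℝ) 1 := fun x =>
    ⟨by linarith [(hb x).2], by linarith [(hb x).1]⟩
  have hQ := integral_le_mul_integral_of_le_smul ENNReal.ofReal_ne_top hQP
    (fun x => (hb x).1) (integrable_of_mem_Icc hm hb)
  have hP := integral_le_mul_integral_of_le_smul ENNReal.ofReal_ne_top hPQ
    (fun x => (hψ x).1) (integrable_of_mem_Icc (measurable_const.sub hm) hψ)
  rw [ENNReal.toReal_ofReal (Real.exp_nonneg ε)] at hQ hP
  rw [integral_one_sub (integrable_of_mem_Icc hm hb)] at hP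
  refine max_le (integral_nonneg fun x => (hψ x).1) (max_le ?_ ?_)
  · rw [integral_one_sub (integrable_of_mem_Icc hm hb)]
    nlinarith [Real.exp_pos ε]
  · rw [Real.exp_neg, inv_mul_le_iff₀ (Real.exp_pos ε)]
    linarith

lemma le_smul_of_exp_neg_mul_le_tradeoff [IsProbabilityMeasure P] [IsFiniteMeasure Q] {ε : ℝ}
    (h : ∀ α ∈ Set.Icc (0:ℝ) 1, Real.exp (-ε) * (1 - α) ≤ tradeoff P Q α) :
    P ≤ ENNReal.ofReal (Real.exp ε) • Q := by
  refine Measure.le_iff.2 fun S hS => ?_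
  have hbound := (h _ ⟨measureReal_nonneg, measureReal_le_one⟩).trans
    (tradeoff_measureReal_compl_le hS)
  rw [probReal_compl_eq_one_sub hS, sub_sub_cancel, Real.exp_neg,
    inv_mul_le_iff₀ (Real.exp_pos ε)] at hbound
  rw [Measure.smul_apply, smul_eq_mul, ← ofReal_measureReal, ← ofReal_measureReal,
    ← ENNReal.ofReal_mul (Real.exp_nonneg ε)]
  exact ENNReal.ofReal_le_ofReal hbound

end

/-- M is (ε,0)-DP (for both orderings of neighbors) iff for all
neighboring D, D' the trade-off function dominates
max(0, 1 − e^ε·α, e^{−ε}(1 − α)). -/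
theorem pureDP_iff_tradeoff_bound
    {𝒟 X : Type*} [MeasurableSpace X]
    (Neighbor : 𝒟 → 𝒟 → Prop) (hsym : ∀ D D', Neighbor D D' → Neighbor D' D)
    (M : 𝒟 → Measure X) (hprob : ∀ D, IsProbabilityMeasure (M D)) (ε : ℝ) :
    (∀ D D', Neighbor D D' → ∀ S : Set X, MeasurableSet S →
        M D S ≤ ENNReal.ofReal (Real.exp ε) * M D' S) ↔
    (∀ D D', Neighbor D D' → ∀ α ∈ Set.Icc (0:ℝ) 1,
        max 0 (max (1 - Real.exp ε * α) (Real.exp (-ε) * (1 - α))) ≤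
          tradeoff (M D) (M D') α) := by
  have hdp : ∀ D D', (∀ S : Set X, MeasurableSet S →
      M D S ≤ ENNReal.ofReal (Real.exp ε) * M D' S) ↔ M D ≤ ENNReal.ofReal (Real.exp ε) • M D' :=
    fun D D' => by rw [Measure.le_iff]; rfl
  simp only [hdp]
  constructor
  · intro hle D D' hN α hα
    exact tradeoff_lower_bound_of_le_smul (hle D D' hN) (hle D' D (hsym D D' hN)) hα.1
  · intro hbound D D' hN
    exact le_smul_of_exp_neg_mul_le_tradeoff fun α hα =>
      (le_max_right _ _).trans ((le_max_right _ _).trans (hbound D D' hN α hα))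
end

section
/- The trade-off function of two Gaussians with equal variance has closed form: T(N(0,σ²), N(μ,σ²))(α) = Φ(Φ^{−1}(1 − α) − μ/σ), where Φ is the standard normal CDF. -/
open MeasureTheory

open ProbabilityTheory

/-!
Neyman–Pearson: the likelihood ratio of `N(μ, σ²)` to `N(0, σ²)` is
`exp ((2μx - μ²) / (2σ²))`, which is nondecreasing in `x` when `μ ≥ 0`, so the threshold test
`1_{[t, ∞)}` is most powerful among tests of its size. With `t = σ Φ⁻¹(1 - α)` its size is
`N(0, σ²)[t, ∞) = α`, and its type II error is `N(μ, σ²)(-∞, t) = Φ(Φ⁻¹(1 - α) - μ/σ)`.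
-/

open Set Real
open scoped NNReal

lemma indicator_one_mem_Icc {X : Type*} (s : Set X) (x : X) :
    s.indicator 1 x ∈ Icc (0 : ℝ) 1 :=
  ⟨indicator_nonneg (fun _ _ ↦ zero_le_one) x,
    indicator_apply_le' (fun _ ↦ le_rfl) (fun _ ↦ zero_le_one)⟩

section NeymanPearson

variable {X : Type*} [MeasurableSpace X]

lemma integral_one_sub_of_mem_Icc {Q : Measure X} [IsProbabilityMeasure Q] {φ : X → ℝ}
    (hφ : Measurable φ) (hφ01 : ∀ x, φ x ∈ Icc (0 : ℝ) 1) :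
    ∫ x, (1 - φ x) ∂Q = 1 - ∫ x, φ x ∂Q := by
  have hint : Integrable φ Q := .of_bound hφ.aestronglyMeasurable 1 <| ae_of_all _ fun x ↦
    (Real.norm_of_nonneg (hφ01 x).1).symm ▸ (hφ01 x).2
  rw [integral_sub (integrable_const 1) hint, integral_const, probReal_univ, one_smul]

lemma tradeoff_eq_one_sub_integral_of_mostPowerful {P Q : Measure X} [IsProbabilityMeasure Q]
    {α : ℝ} {ψ : X → ℝ} (hψ : Measurable ψ) (hψ01 : ∀ x, ψ x ∈ Icc (0 : ℝ) 1)
    (hsize : ∫ x, ψ x ∂P ≤ α)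
    (hpower : ∀ φ : X → ℝ, Measurable φ → (∀ x, φ x ∈ Icc (0 : ℝ) 1) →
      ∫ x, φ x ∂P ≤ α → ∫ x, φ x ∂Q ≤ ∫ x, ψ x ∂Q) :
    tradeoff P Q α = 1 - ∫ x, ψ x ∂Q := by
  refine IsLeast.csInf_eq ⟨⟨ψ, hψ, hψ01, hsize, (integral_one_sub_of_mem_Icc hψ hψ01).symm⟩, ?_⟩
  rintro _ ⟨φ, hφ, hφ01, hφα, rfl⟩
  rw [integral_one_sub_of_mem_Icc hφ hφ01]
  linarith [hpower φ hφ hφ01 hφα]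

lemma integral_mul_le_of_neymanPearson {ν : Measure X} {p q φ ψ : X → ℝ} {k : ℝ} (hk : 0 ≤ k)
    (hp : Integrable p ν) (hq : Integrable q ν) (hφ : Measurable φ)
    (hφ01 : ∀ x, φ x ∈ Icc (0 : ℝ) 1) (hψ : Measurable ψ) (hψ01 : ∀ x, ψ x ∈ Icc (0 : ℝ) 1)
    (hNP : ∀ x, 0 ≤ (ψ x - φ x) * (q x - k * p x))
    (hsize : ∫ x, p x * φ x ∂ν ≤ ∫ x, p x * ψ x ∂ν) :
    ∫ x, q x * φ x ∂ν ≤ ∫ x, q x * ψ x ∂ν := by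
  have hint {f g : X → ℝ} (hf : Integrable f ν) (hg : Measurable g)
      (hg01 : ∀ x, g x ∈ Icc (0 : ℝ) 1) : Integrable (fun x ↦ f x * g x) ν :=
    hf.mul_bdd hg.aestronglyMeasurable <| ae_of_all _ fun x ↦
      (Real.norm_of_nonneg (hg01 x).1).symm ▸ (hg01 x).2
  have hq' : Integrable (fun x ↦ q x * ψ x - q x * φ x) ν :=
    (hint hq hψ hψ01).sub (hint hq hφ hφ01)
  have hp' : Integrable (fun x ↦ p x * ψ x - p x * φ x) ν :=
    (hint hp hψ hψ01).sub (hint hp hφ hφ01)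
  have hsplit : ∫ x, (ψ x - φ x) * (q x - k * p x) ∂ν
      = (∫ x, q x * ψ x ∂ν - ∫ x, q x * φ x ∂ν)
        - k * (∫ x, p x * ψ x ∂ν - ∫ x, p x * φ x ∂ν) := by
    rw [← integral_sub (hint hq hψ hψ01) (hint hq hφ hφ01),
      ← integral_sub (hint hp hψ hψ01) (hint hp hφ hφ01), ← integral_const_mul,
      ← integral_sub hq' (hp'.const_mul k)]
    congr 1 with x
    ring
  have hNP_int : 0 ≤ ∫ x, (ψ x - φ x) * (q x - k * p x) ∂ν := integral_nonneg hNP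
  nlinarith [mul_nonneg hk (sub_nonneg.2 hsize)]

-- The threshold test meets the Neyman–Pearson sign condition with critical value `L t`.
lemma indicator_Ici_sub_mul_nonneg {Y : Type*} [LinearOrder Y] {L : Y → ℝ} (hL : Monotone L)
    {t x : Y} {c p : ℝ} (hc : c ∈ Icc (0 : ℝ) 1) (hp : 0 ≤ p) :
    0 ≤ ((Ici t).indicator 1 x - c) * (p * (L x - L t)) := by
  rcases le_or_gt t x with htx | hxt
  · rw [indicator_of_mem (mem_Ici.2 htx), Pi.one_apply]
    exact mul_nonneg (sub_nonneg.2 hc.2) (mul_nonneg hp (sub_nonneg.2 (hL htx)))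
  · rw [indicator_of_notMem (notMem_Ici.2 hxt), zero_sub]
    exact mul_nonneg_of_nonpos_of_nonpos (neg_nonpos.2 hc.1)
      (mul_nonpos_of_nonneg_of_nonpos hp (sub_nonpos.2 (hL hxt.le)))

end NeymanPearson

section Gaussian

lemma gaussianPDFReal_eq_mul_exp (μ : ℝ) (v : ℝ≥0) (x : ℝ) :
    gaussianPDFReal μ v x = gaussianPDFReal 0 v x * exp ((2 * μ * x - μ ^ 2) / (2 * v)) := by
  simp only [gaussianPDFReal, sub_zero]
  rw [mul_assoc _ (rexp _), ← exp_add]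
  congr 2
  rcases eq_or_ne (v : ℝ) 0 with hv | hv
  · simp [hv]
  · field_simp
    ring

lemma monotone_exp_gaussian_likelihoodRatio {μ : ℝ} (hμ : 0 ≤ μ) (v : ℝ≥0) :
    Monotone fun x : ℝ ↦ exp ((2 * μ * x - μ ^ 2) / (2 * v)) := fun _ _ hxy ↦
  exp_le_exp.2 <| div_le_div_of_nonneg_right (by nlinarith) (by positivity)

lemma integral_gaussianReal_le_integral_indicator_Ici {μ : ℝ} (hμ : 0 ≤ μ) {v : ℝ≥0}
    (hv : v ≠ 0) (t : ℝ) {φ : ℝ → ℝ} (hφ : Measurable φ) (hφ01 : ∀ x, φ x ∈ Icc (0 : ℝ) 1)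
    (hsize : ∫ x, φ x ∂gaussianReal 0 v ≤ ∫ x, (Ici t).indicator 1 x ∂gaussianReal 0 v) :
    ∫ x, φ x ∂gaussianReal μ v ≤ ∫ x, (Ici t).indicator 1 x ∂gaussianReal μ v := by
  simp only [integral_gaussianReal_eq_integral_smul hv, smul_eq_mul] at hsize ⊢
  refine integral_mul_le_of_neymanPearson (k := exp ((2 * μ * t - μ ^ 2) / (2 * v)))
    (exp_pos _).le (integrable_gaussianPDFReal 0 v) (integrable_gaussianPDFReal μ v)
    hφ hφ01 (measurable_one.indicator measurableSet_Ici) (indicator_one_mem_Icc _)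
    (fun x ↦ ?_) hsize
  rw [gaussianPDFReal_eq_mul_exp μ v x, mul_comm (exp _) (gaussianPDFReal 0 v x), ← mul_sub]
  exact indicator_Ici_sub_mul_nonneg (monotone_exp_gaussian_likelihoodRatio hμ v) (hφ01 x)
    (gaussianPDFReal_nonneg 0 v x)

lemma gaussianReal_map_sub_div {σ : ℝ≥0} (hσ : σ ≠ 0) (m : ℝ) :
    (gaussianReal m (σ ^ 2)).map (fun x ↦ (x - m) / σ) = gaussianReal 0 1 := by
  have hcomp : (fun x : ℝ ↦ (x - m) / σ) = (· / (σ : ℝ)) ∘ (· - m) := rfl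
  rw [hcomp, ← Measure.map_map (by fun_prop) (by fun_prop), gaussianReal_map_sub_const,
    gaussianReal_map_div_const, sub_self, zero_div]
  congr 1
  ext
  simp [hσ]

lemma gaussianReal_Iic {σ : ℝ≥0} (hσ : σ ≠ 0) (m s : ℝ) :
    gaussianReal m (σ ^ 2) (Iic s) = gaussianReal 0 1 (Iic ((s - m) / σ)) := by
  rw [← gaussianReal_map_sub_div hσ m, Measure.map_apply (by fun_prop) measurableSet_Iic]
  congr 1
  ext x
  simp [div_le_div_iff_of_pos_right (NNReal.coe_pos.2 (pos_iff_ne_zero.2 hσ))]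

lemma gaussianReal_real_Ici {σ : ℝ≥0} (hσ : σ ≠ 0) (m s : ℝ) :
    (gaussianReal m (σ ^ 2)).real (Ici s) = 1 - (gaussianReal 0 1).real (Iic ((s - m) / σ)) := by
  have := nullSingletonClass_gaussianReal (μ := m) (pow_ne_zero 2 hσ)
  rw [← compl_Iio, probReal_compl_eq_one_sub measurableSet_Iio, measureReal_congr Iio_ae_eq_Iic,
    measureReal_def, measureReal_def, gaussianReal_Iic hσ]

end Gaussian

/-- closed form of the Gaussian trade-off function:
T(N(0,σ²), N(μ,σ²))(α) = Φ(Φ⁻¹(1 − α) − μ/σ). -/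
theorem gaussian_tradeoff_closed_form
    (σ : NNReal) (hσ : 0 < σ) (μ : ℝ) (hμ : 0 ≤ μ)
    (Φ : ℝ → ℝ) (hΦ : ∀ x, Φ x = ((gaussianReal 0 1) (Set.Iic x)).toReal)
    (Φinv : ℝ → ℝ) (hΦinv : ∀ y ∈ Set.Ioo (0:ℝ) 1, Φ (Φinv y) = y)
    (α : ℝ) (hα : α ∈ Set.Ioo (0:ℝ) 1) :
    tradeoff (gaussianReal 0 (σ ^ 2)) (gaussianReal μ (σ ^ 2)) α =
      Φ (Φinv (1 - α) - μ / σ) := by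
  set t : ℝ := σ * Φinv (1 - α)
  have hσ0 : (σ : ℝ) ≠ 0 := NNReal.coe_ne_zero.2 hσ.ne'
  have hsize : ∫ x, (Ici t).indicator 1 x ∂gaussianReal 0 (σ ^ 2) = α := by
    rw [integral_indicator_one measurableSet_Ici, gaussianReal_real_Ici hσ.ne', measureReal_def,
      ← hΦ, sub_zero, mul_div_cancel_left₀ _ hσ0, hΦinv _ ⟨by linarith [hα.2], by linarith [hα.1]⟩]
    ring
  rw [tradeoff_eq_one_sub_integral_of_mostPowerful (measurable_one.indicator measurableSet_Ici)
      (indicator_one_mem_Icc _) hsize.le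
      (fun φ hφ hφ01 hφα ↦ integral_gaussianReal_le_integral_indicator_Ici hμ
        (pow_ne_zero 2 hσ.ne') t hφ hφ01 (hsize ▸ hφα)),
    integral_indicator_one measurableSet_Ici, gaussianReal_real_Ici hσ.ne', measureReal_def, ← hΦ,
    sub_div, mul_div_cancel_left₀ _ hσ0]
  ring
end
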